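/- arXiv:0807.4085 — 4 statements merged into one kernel-verified Lean document; each statement's English description precedes it below -/
import Mathlib

section
/- If δ is a locally nilpotent ℂ[t,t⁻¹]-derivation of A[w] ⊗_{ℂ[t]} ℂ[t,t⁻¹], where A[w] is a finitely generated ℂ-algebra containing t, then there exists k ≥ 0 such that t^k·δ maps A[w] into itself and the restriction of t^k·δ to A[w] is a locally nilpotent derivation of A[w]. -/
/-!
Clearing the denominators of `δ` on a finite generating set of `B` gives a `k` with
`t ^ k • δ` mapping those generators into `B`; the elements on which this holds form a
subalgebra, so `t ^ k • δ` restricts to a derivation `d` of `B`. Since `δ t = 0`, multiplication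
by `t ^ k` commutes with `δ`, hence `(t ^ k • δ) ^ n = t ^ (n * k) • δ ^ n`, and local nilpotency
descends to `d` because `B` embeds in `B_t`.
-/

def Module.End.IsLocallyNilpotent {R M : Type*} [Semiring R] [AddCommMonoid M] [Module R M]
    (f : Module.End R M) : Prop :=
  ∀ x, ∃ n : ℕ, (f ^ n) x = 0

namespace Module.End.IsLocallyNilpotent

variable {R M N : Type*} [Semiring R] [AddCommMonoid M] [Module R M]
  [AddCommMonoid N] [Module R N]

theorem mul_of_commute {a f : Module.End R M} (hf : f.IsLocallyNilpotent) (h : Commute a f) :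
    (a * f).IsLocallyNilpotent := fun x => by
  obtain ⟨n, hn⟩ := hf x
  exact ⟨n, by rw [h.mul_pow, Module.End.mul_apply, hn, map_zero]⟩

theorem of_comp_eq {f : Module.End R M} {f' : Module.End R N} {g : M →ₗ[R] N}
    (hg : Function.Injective g) (h : f'.comp g = g.comp f) (hf' : f'.IsLocallyNilpotent) :
    f.IsLocallyNilpotent := fun x => by
  obtain ⟨n, hn⟩ := hf' (g x)
  refine ⟨n, hg ?_⟩
  rw [map_zero, ← LinearMap.comp_apply, ← Module.End.commute_pow_left_of_commute h,
    LinearMap.comp_apply, hn]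

end Module.End.IsLocallyNilpotent

namespace Derivation

theorem apply_mem_of_mem_adjoin {R A M : Type*} [CommSemiring R] [CommSemiring A] [Algebra R A]
    [AddCommMonoid M] [Module A M] [Module R M] [IsScalarTower R A M]
    (d : Derivation R A M) {N : Submodule A M} {s : Set A} (hs : ∀ x ∈ s, d x ∈ N) {a : A}
    (ha : a ∈ Algebra.adjoin R s) : d a ∈ N := by
  induction ha using Algebra.adjoin_induction with
  | mem x hx => exact hs x hx
  | algebraMap r => simp
  | add x y _ _ hx hy => simpa using add_mem hx hy
  | mul x y _ _ hx hy => simpa using add_mem (N.smul_mem x hy) (N.smul_mem y hx)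

theorem exists_lift_of_mem_range {R A S : Type*} [CommRing R] [CommRing A] [CommRing S]
    [Algebra R A] [Algebra R S] [Algebra A S] [IsScalarTower R A S]
    (hinj : Function.Injective (algebraMap A S)) (D : Derivation R A S)
    (hD : ∀ a, D a ∈ LinearMap.range (Algebra.linearMap A S)) :
    ∃ d : Derivation R A A, ∀ a, algebraMap A S (d a) = D a := by
  let i := (Algebra.linearMap A S).restrictScalars R
  let l := LinearMap.codRestrictOfInjective (D : A →ₗ[R] S) i hinj hD
  have hl (a : A) : algebraMap A S (l a) = D a :=
    LinearMap.codRestrictOfInjective_comp_apply (D : A →ₗ[R] S) i hinj hD a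
  refine ⟨Derivation.mk' l fun a b => hinj ?_, hl⟩
  simp only [map_add, map_mul, smul_eq_mul, hl, D.leibniz, Algebra.smul_def]

theorem isLocallyNilpotent_smul {R S : Type*} [CommRing R] [CommRing S] [Algebra R S]
    {D : Derivation R S S} (hD : Module.End.IsLocallyNilpotent D.toLinearMap) {c : S}
    (hc : D c = 0) : Module.End.IsLocallyNilpotent (c • D).toLinearMap := by
  have hcomm : Commute (LinearMap.mulLeft R c) D.toLinearMap := by
    ext x
    simp [D.leibniz, hc]
  exact hD.mul_of_commute hcomm

end Derivation

/-- If `B` is a finitely generated ℂ-algebra, `t ∈ B` a nonzerodivisor (so that `B` embeds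
in the localization `B_t`), and `δ` is a locally nilpotent derivation of `B_t`
annihilating `t`, then for some `k ≥ 0` the derivation `t^k·δ` maps `B` into itself and
restricts to a locally nilpotent derivation of `B`. -/
theorem stmt8 (B : Type) [CommRing B] [Algebra ℂ B] [Algebra.FiniteType ℂ B]
    (t : B) (hinj : Function.Injective (algebraMap B (Localization.Away t)))
    (δ : Derivation ℂ (Localization.Away t) (Localization.Away t))
    (hδt : δ (algebraMap B (Localization.Away t) t) = 0)
    (hln : ∀ a : Localization.Away t, ∃ n : ℕ, (δ.toLinearMap ^ n) a = 0) :
    ∃ (k : ℕ) (d : Derivation ℂ B B),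
      (∀ b : B,
        algebraMap B (Localization.Away t) (d b) =
          (algebraMap B (Localization.Away t) t) ^ k * δ (algebraMap B (Localization.Away t) b)) ∧
      (∀ b : B, ∃ n : ℕ, (d.toLinearMap ^ n) b = 0) := by
  set L := Localization.Away t
  set c := algebraMap B L t
  obtain ⟨s, hs⟩ := Algebra.FiniteType.out (R := ℂ) (A := B)
  obtain ⟨⟨_, k, rfl⟩, hk⟩ :=
    IsLocalization.exist_integer_multiples (Submonoid.powers t) s fun x => δ (algebraMap B L x)
  set D := (c ^ k • δ).compAlgebraMap B
  have hD : ∀ x ∈ (s : Set B), D x ∈ LinearMap.range (Algebra.linearMap B L) := by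
    intro x hx
    obtain ⟨y, hy⟩ := hk x hx
    exact ⟨y, by simpa [D, c, Algebra.smul_def] using hy⟩
  obtain ⟨d, hd⟩ := Derivation.exists_lift_of_mem_range hinj D
    fun b => D.apply_mem_of_mem_adjoin hD (hs ▸ Algebra.mem_top)
  refine ⟨k, d, hd, ?_⟩
  refine Module.End.IsLocallyNilpotent.of_comp_eq (g := (Algebra.linearMap B L).restrictScalars ℂ)
    hinj ?_ (Derivation.isLocallyNilpotent_smul hln (c := c ^ k) (by simp [hδt]))
  ext b
  exact (hd b).symm
end

section
/- The intersection of the kernels of the two locally nilpotent derivations ∂₁ and ∂₂ of A = ℂ[x,y,z,t]/(x + x²y + z² + t³), induced by x²∂_z − 2z∂_y and x²∂_t − 3t²∂_y respectively, equals ℂ[x]. -/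
/-!
Write `f = x²y + g` with `g = x + z² + t³`. Modulo `f`, multiplication by `x²` trades `x²y` for
`-g`, so every `p` has a multiple `x^{2k} p` congruent to a polynomial `r` free of `y`. Since
`∂₁, ∂₂` kill `x`, they kill the class of `r` whenever they kill that of `p`; on `y`-free
polynomials they are `x²∂_z` and `x²∂_t`, and no nonzero multiple of `f` is free of `y`, so
`∂_z r = ∂_t r = 0`, i.e. `r ∈ ℂ[x]`. Finally `ℂ[x̄]` is saturated for `x̄` in `A`: as `x` is prime,
does not divide `f`, and `f` vanishes at the origin, `x̄ a ∈ ℂ[x̄]` forces `a ∈ ℂ[x̄]`.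
-/

set_option synthInstance.maxHeartbeats 1000000
set_option maxHeartbeats 1000000

open MvPolynomial

/-- The defining polynomial `x + x²y + z² + t³` of the Koras-Russell cubic threefold
(variables `0 ↦ x`, `1 ↦ y`, `2 ↦ z`, `3 ↦ t`). -/
noncomputable def f13 : MvPolynomial (Fin 4) ℂ :=
  X 0 + (X 0) ^ 2 * X 1 + (X 2) ^ 2 + (X 3) ^ 3

/-- The coordinate ring `A = ℂ[x,y,z,t]/(x + x²y + z² + t³)`. -/
abbrev A13 : Type := MvPolynomial (Fin 4) ℂ ⧸ Ideal.span {f13}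

/-- The derivation `x²∂_z − 2z∂_y` of `ℂ[x,y,z,t]`. -/
noncomputable def D13a : Derivation ℂ (MvPolynomial (Fin 4) ℂ) (MvPolynomial (Fin 4) ℂ) :=
  MvPolynomial.mkDerivation ℂ ![0, -2 * X 2, (X 0) ^ 2, 0]

/-- The derivation `x²∂_t − 3t²∂_y` of `ℂ[x,y,z,t]`. -/
noncomputable def D13b : Derivation ℂ (MvPolynomial (Fin 4) ℂ) (MvPolynomial (Fin 4) ℂ) :=
  MvPolynomial.mkDerivation ℂ ![0, -3 * (X 3) ^ 2, 0, (X 0) ^ 2]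

theorem Derivation.map_eq_zero_of_mem_adjoin_singleton {R A M : Type*} [CommSemiring R]
    [CommSemiring A] [Algebra R A] [AddCommMonoid M] [Module A M] [Module R M]
    [IsScalarTower R A M] (D : Derivation R A M) {x a : A} (hx : D x = 0)
    (ha : a ∈ Algebra.adjoin R {x}) : D a = 0 :=
  Derivation.eqOn_adjoin (D2 := 0) (Set.eqOn_singleton.2 hx) ha

namespace MvPolynomial

variable {R σ : Type*}

theorem pderiv_mem_supported [CommSemiring R] {s : Set σ} {p : MvPolynomial σ R}
    (hp : p ∈ supported R s) (i : σ) : pderiv i p ∈ supported R s := by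
  classical
  induction hp using Algebra.adjoin_induction with
  | mem x hx =>
    obtain ⟨j, -, rfl⟩ := hx
    rw [pderiv_X]
    by_cases hij : i = j
    · subst hij; simp
    · simp [Pi.single_eq_of_ne' hij]
  | algebraMap r => simp
  | add x y _ _ hx hy => simpa using add_mem hx hy
  | mul x y hx hy hx' hy' =>
    rw [Derivation.leibniz, smul_eq_mul, smul_eq_mul]
    exact add_mem (mul_mem hx hy') (mul_mem hy hx')

theorem notMem_vars_of_pderiv_eq_zero [CommSemiring R] [NoZeroDivisors R] [CharZero R]
    {p : MvPolynomial σ R} {i : σ} (h : pderiv i p = 0) : i ∉ p.vars := by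
  intro hi
  obtain ⟨d, hd, hid⟩ := (mem_vars_iff_mem_support i).1 hi
  have hd' : d - Finsupp.single i 1 + Finsupp.single i 1 = d :=
    tsub_add_cancel_of_le (Finsupp.single_le_iff.2 (Nat.one_le_iff_ne_zero.2
      (Finsupp.mem_support_iff.1 hid)))
  have := congrArg (coeff (d - Finsupp.single i 1)) h
  rw [coeff_pderiv, hd', coeff_zero] at this
  exact mul_ne_zero (mem_support_iff.1 hd) (Nat.cast_add_one_ne_zero _) this

theorem eq_zero_of_mem_span_singleton_of_notMem_vars [CommSemiring R] [NoZeroDivisors R]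
    {f s : MvPolynomial σ R} {i : σ} (hf : i ∈ f.vars) (hs : s ∈ Ideal.span {f})
    (hi : i ∉ s.vars) : s = 0 := by
  obtain ⟨u, rfl⟩ := Ideal.mem_span_singleton'.1 hs
  by_contra hfu
  have hf0 : f ≠ 0 := by rintro rfl; simp at hf
  rw [mem_vars_iff_degreeOf_ne_zero, degreeOf_mul_eq (left_ne_zero_of_mul hfu) hf0] at hi
  exact hi (by rw [mem_vars_iff_degreeOf_ne_zero] at hf; omega)

theorem exists_pow_mul_sub_mem_span_singleton [CommRing R] {f a : MvPolynomial σ R} {i : σ}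
    (ha : a ∈ supported R {i}ᶜ) (hf : f - X i * a ∈ supported R {i}ᶜ) (p : MvPolynomial σ R) :
    ∃ k : ℕ, ∃ r ∈ supported R {i}ᶜ, a ^ k * p - r ∈ Ideal.span {f} := by
  induction p using MvPolynomial.induction_on with
  | C c => exact ⟨0, C c, Subalgebra.algebraMap_mem _ c, by simp⟩
  | add p q hp hq =>
    obtain ⟨k, r, hr, hpr⟩ := hp
    obtain ⟨l, s, hs, hqs⟩ := hq
    refine ⟨k + l, a ^ l * r + a ^ k * s,
      add_mem (mul_mem (pow_mem ha l) hr) (mul_mem (pow_mem ha k) hs), ?_⟩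
    have : a ^ (k + l) * (p + q) - (a ^ l * r + a ^ k * s) =
        a ^ l * (a ^ k * p - r) + a ^ k * (a ^ l * q - s) := by ring
    rw [this]
    exact add_mem (Ideal.mul_mem_left _ _ hpr) (Ideal.mul_mem_left _ _ hqs)
  | mul_X p j hp =>
    obtain ⟨k, r, hr, hpr⟩ := hp
    by_cases hj : j = i
    · subst hj
      -- `X j * a ≡ -(f - X j * a)` modulo `f`
      refine ⟨k + 1, -((f - X j * a) * r), neg_mem (mul_mem hf hr), ?_⟩
      have : a ^ (k + 1) * (p * X j) - -((f - X j * a) * r) =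
          X j * a * (a ^ k * p - r) + r * f := by ring
      rw [this]
      exact add_mem (Ideal.mul_mem_left _ _ hpr)
        (Ideal.mul_mem_left _ _ (Ideal.mem_span_singleton_self f))
    · have hXj : X j ∈ supported R {i}ᶜ := Algebra.subset_adjoin (Set.mem_image_of_mem X hj)
      refine ⟨k, r * X j, mul_mem hr hXj, ?_⟩
      have : a ^ k * (p * X j) - r * X j = X j * (a ^ k * p - r) := by ring
      rw [this]
      exact Ideal.mul_mem_left _ _ hpr

theorem mem_adjoin_of_X_mul_mem_adjoin [CommRing R] [IsDomain R] {f : MvPolynomial σ R} {i : σ}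
    (hf₀ : constantCoeff f = 0) (hfX : ¬X i ∣ f) {a : MvPolynomial σ R ⧸ Ideal.span {f}}
    (h : Ideal.Quotient.mk _ (X i) * a ∈ Algebra.adjoin R {Ideal.Quotient.mk _ (X i)}) :
    a ∈ Algebra.adjoin R {Ideal.Quotient.mk (Ideal.span {f}) (X i)} := by
  obtain ⟨w, rfl⟩ := Ideal.Quotient.mk_surjective a
  have hlift (g : Polynomial R) :
      Polynomial.aeval (Ideal.Quotient.mk (Ideal.span {f}) (X i)) g =
        Ideal.Quotient.mk _ (Polynomial.aeval (X i) g) :=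
    Polynomial.aeval_algHom_apply (Ideal.Quotient.mkₐ R _) _ _
  rw [Algebra.adjoin_singleton_eq_range_aeval, AlgHom.mem_range] at h ⊢
  obtain ⟨q, hq⟩ := h
  rw [hlift, ← map_mul, Ideal.Quotient.eq, Ideal.mem_span_singleton'] at hq
  obtain ⟨u, hu⟩ := hq
  rw [← Polynomial.X_mul_divX_add q, map_add, map_mul, Polynomial.aeval_X,
    Polynomial.aeval_C] at hu
  have hc : q.coeff 0 = 0 := by simpa [hf₀] using (congrArg constantCoeff hu).symm
  rw [hc, map_zero, add_zero, ← mul_sub] at hu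
  obtain ⟨u₁, rfl⟩ := (X_prime.dvd_or_dvd ⟨_, hu⟩).resolve_right hfX
  rw [mul_assoc] at hu
  refine ⟨q.divX, ?_⟩
  rw [hlift, Ideal.Quotient.eq, Ideal.mem_span_singleton']
  exact ⟨u₁, mul_left_cancel₀ (X_ne_zero i) hu⟩

theorem mem_adjoin_of_X_pow_mul_mem_adjoin [CommRing R] [IsDomain R] {f : MvPolynomial σ R}
    {i : σ} (hf₀ : constantCoeff f = 0) (hfX : ¬X i ∣ f) {a : MvPolynomial σ R ⧸ Ideal.span {f}}
    {n : ℕ}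
    (h : Ideal.Quotient.mk _ (X i) ^ n * a ∈ Algebra.adjoin R {Ideal.Quotient.mk _ (X i)}) :
    a ∈ Algebra.adjoin R {Ideal.Quotient.mk (Ideal.span {f}) (X i)} := by
  induction n with
  | zero => simpa using h
  | succ n ih =>
    exact ih (mem_adjoin_of_X_mul_mem_adjoin hf₀ hfX (by rwa [← mul_assoc, ← pow_succ']))

end MvPolynomial

namespace KorasRussell

theorem D13a_apply (p : MvPolynomial (Fin 4) ℂ) :
    D13a p = X 0 ^ 2 * pderiv 2 p - 2 * X 2 * pderiv 1 p := by
  have : D13a = (X 0 ^ 2 : MvPolynomial (Fin 4) ℂ) • pderiv 2 -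
      (2 * X 2 : MvPolynomial (Fin 4) ℂ) • pderiv 1 := by
    refine derivation_ext fun i => ?_
    fin_cases i <;> simp [D13a, mkDerivation_X]
  simp [this]

theorem D13b_apply (p : MvPolynomial (Fin 4) ℂ) :
    D13b p = X 0 ^ 2 * pderiv 3 p - 3 * X 3 ^ 2 * pderiv 1 p := by
  have : D13b = (X 0 ^ 2 : MvPolynomial (Fin 4) ℂ) • pderiv 3 -
      (3 * X 3 ^ 2 : MvPolynomial (Fin 4) ℂ) • pderiv 1 := by
    refine derivation_ext fun i => ?_
    fin_cases i <;> simp [D13b, mkDerivation_X]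
  simp [this]

theorem D13a_X_zero : D13a (X 0 : MvPolynomial (Fin 4) ℂ) = 0 := by simp [D13a, mkDerivation_X]

theorem D13b_X_zero : D13b (X 0 : MvPolynomial (Fin 4) ℂ) = 0 := by simp [D13b, mkDerivation_X]

theorem constantCoeff_f13 : constantCoeff f13 = 0 := by simp [f13]

theorem not_X_zero_dvd_f13 : ¬X 0 ∣ f13 := by
  rintro ⟨v, hv⟩
  simpa [f13] using congrArg (aeval ![(0 : ℂ), 0, 1, 0]) hv

theorem one_mem_vars_f13 : 1 ∈ f13.vars := by
  by_contra h
  have : pderiv 1 f13 = X 0 ^ 2 := by simp [f13, pderiv_X]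
  exact pow_ne_zero 2 (X_ne_zero 0) (this ▸ pderiv_eq_zero_of_notMem_vars h)

theorem exists_X_zero_sq_pow_mul_sub_mem_span (p : MvPolynomial (Fin 4) ℂ) :
    ∃ k : ℕ, ∃ r ∈ supported ℂ {1}ᶜ, (X 0 ^ 2) ^ k * p - r ∈ Ideal.span {f13} := by
  have hX (j : Fin 4) (hj : j ≠ 1) : X j ∈ supported ℂ ({1}ᶜ : Set (Fin 4)) :=
    X_mem_supported.2 hj
  refine exists_pow_mul_sub_mem_span_singleton (pow_mem (hX 0 (by decide)) 2) ?_ p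
  have : f13 - X 1 * X 0 ^ 2 = X 0 + X 2 ^ 2 + X 3 ^ 3 := by rw [f13]; ring
  rw [this]
  exact add_mem (add_mem (hX 0 (by decide)) (pow_mem (hX 2 (by decide)) 2))
    (pow_mem (hX 3 (by decide)) 3)

theorem notMem_vars_of_X_zero_sq_mul_pderiv_mem_span {r : MvPolynomial (Fin 4) ℂ}
    (hr : r ∈ supported ℂ {1}ᶜ) {j : Fin 4} (h : X 0 ^ 2 * pderiv j r ∈ Ideal.span {f13}) :
    j ∉ r.vars := by
  have hy : X 0 ^ 2 * pderiv j r ∈ supported ℂ {1}ᶜ :=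
    mul_mem (pow_mem (X_mem_supported.2 (by decide)) 2) (pderiv_mem_supported hr j)
  have := eq_zero_of_mem_span_singleton_of_notMem_vars one_mem_vars_f13 h
    (mem_supported.1 hy · rfl)
  exact notMem_vars_of_pderiv_eq_zero
    ((mul_eq_zero.1 this).resolve_left (pow_ne_zero 2 (X_ne_zero 0)))

theorem mem_adjoin_X_zero_of_D13_mem_span {r : MvPolynomial (Fin 4) ℂ}
    (hr : r ∈ supported ℂ {1}ᶜ) (ha : D13a r ∈ Ideal.span {f13})
    (hb : D13b r ∈ Ideal.span {f13}) : r ∈ Algebra.adjoin ℂ {X 0} := by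
  have hy : pderiv 1 r = 0 := pderiv_eq_zero_of_notMem_vars (mem_supported.1 hr · rfl)
  rw [D13a_apply, hy, mul_zero, sub_zero] at ha
  rw [D13b_apply, hy, mul_zero, sub_zero] at hb
  rw [← Set.image_singleton, ← supported_eq_adjoin_X, mem_supported]
  intro j hj
  fin_cases j
  · rfl
  · exact absurd rfl (mem_supported.1 hr hj)
  · exact absurd hj (notMem_vars_of_X_zero_sq_mul_pderiv_mem_span hr ha)
  · exact absurd hj (notMem_vars_of_X_zero_sq_mul_pderiv_mem_span hr hb)

end KorasRussell

open KorasRussell in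
/-- The intersection of the kernels of the two locally nilpotent derivations `∂₁`, `∂₂`
of `A = ℂ[x,y,z,t]/(x + x²y + z² + t³)` induced by `x²∂_z − 2z∂_y` and
`x²∂_t − 3t²∂_y` equals `ℂ[x]`. -/
theorem stmt13 (d₁ d₂ : Derivation ℂ A13 A13)
    (h₁ : ∀ p : MvPolynomial (Fin 4) ℂ,
      d₁ (Ideal.Quotient.mk (Ideal.span {f13}) p) =
        Ideal.Quotient.mk (Ideal.span {f13}) (D13a p))
    (h₂ : ∀ p : MvPolynomial (Fin 4) ℂ,
      d₂ (Ideal.Quotient.mk (Ideal.span {f13}) p) =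
        Ideal.Quotient.mk (Ideal.span {f13}) (D13b p)) :
    ∀ a : A13,
      (d₁ a = 0 ∧ d₂ a = 0) ↔
        a ∈ Algebra.adjoin ℂ {Ideal.Quotient.mk (Ideal.span {f13}) (X 0)} := by
  set π := Ideal.Quotient.mk (Ideal.span {f13})
  have hx₁ : d₁ (π (X 0)) = 0 := by rw [h₁, D13a_X_zero, map_zero]
  have hx₂ : d₂ (π (X 0)) = 0 := by rw [h₂, D13b_X_zero, map_zero]
  refine fun a => ⟨fun ⟨ha₁, ha₂⟩ => ?_, fun ha =>
    ⟨d₁.map_eq_zero_of_mem_adjoin_singleton hx₁ ha, d₂.map_eq_zero_of_mem_adjoin_singleton hx₂ ha⟩⟩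
  obtain ⟨p, rfl⟩ := Ideal.Quotient.mk_surjective a
  obtain ⟨k, r, hr, hpr⟩ := exists_X_zero_sq_pow_mul_sub_mem_span p
  have hpow : π (X 0) ^ (2 * k) * π p = π r := by
    rw [pow_mul, ← map_pow, ← map_pow, ← map_mul]
    exact Ideal.Quotient.eq.2 hpr
  have hconst {d : Derivation ℂ A13 A13} (hx : d (π (X 0)) = 0) (hp : d (π p) = 0) :
      d (π r) = 0 := by
    rw [← hpow, Derivation.leibniz, hp, d.map_eq_zero_of_mem_adjoin_singleton hx
      (pow_mem (Algebra.self_mem_adjoin_singleton ℂ _) _), smul_zero, smul_zero, add_zero]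
  have hra : D13a r ∈ Ideal.span {f13} := by
    rw [← Ideal.Quotient.eq_zero_iff_mem, ← h₁]; exact hconst hx₁ ha₁
  have hrb : D13b r ∈ Ideal.span {f13} := by
    rw [← Ideal.Quotient.eq_zero_iff_mem, ← h₂]; exact hconst hx₂ ha₂
  have hrx : π r ∈ Algebra.adjoin ℂ {π (X 0)} := by
    rw [← Ideal.Quotient.mkₐ_eq_mk ℂ, ← AlgHom.map_adjoin_singleton]
    exact ⟨r, mem_adjoin_X_zero_of_D13_mem_span hr hra hrb, rfl⟩
  exact mem_adjoin_of_X_pow_mul_mem_adjoin constantCoeff_f13 not_X_zero_dvd_f13 (hpow ▸ hrx)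
end

section
/- For the derivation D = x²∂_y + 2y∂_z of ℂ[x,y,z,t^{±1}] (with D(x)=D(t)=0), the induced 𝔾_a-action on X₂ = {x²z = y² + x − t³} is set-theoretically free: for any point p of X₂ and any s ≠ 0 in 𝔾_a, the flow of the action moves p. Equivalently, the exponential action (s,(x,y,z,t)) ↦ (x, y + x²s, z + 2ys + x²s², t) has no fixed points on X₂ for s ≠ 0. -/
/-! A point fixed at time `s ≠ 0` has `x²s = 0` and then `2ys = 0`, so `x = y = 0`; on `X₂` this
forces `t³ = 0`, which is excluded. -/

theorem eq_zero_and_eq_zero_of_flow_fixed {R : Type*} [CommRing R] [IsDomain R]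
    (h2 : (2 : R) ≠ 0) {x y z s : R} (hs : s ≠ 0)
    (hy : y + x ^ 2 * s = y) (hz : z + 2 * y * s + x ^ 2 * s ^ 2 = z) :
    x = 0 ∧ y = 0 := by
  have hx : x = 0 := by
    have hx2s : x ^ 2 * s = 0 := by linear_combination hy
    exact pow_eq_zero_iff two_ne_zero |>.mp ((mul_eq_zero.mp hx2s).resolve_right hs)
  subst hx
  have h2ys : 2 * y * s = 0 := by linear_combination hz
  exact ⟨rfl, (mul_eq_zero.mp ((mul_eq_zero.mp h2ys).resolve_right hs)).resolve_left h2⟩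

/-- The `𝔾_a`-action `exp(sD)` on `X₂ = {x²z = y² + x − t³, t ≠ 0}` associated to the
derivation `D = x²∂_y + 2y∂_z` is set-theoretically free: if a point of `X₂` is fixed by
the flow at time `s`, then `s = 0`. -/
theorem stmt16 (x y z t s : ℂ) (ht : t ≠ 0)
    (heq : x ^ 2 * z - y ^ 2 - x + t ^ 3 = 0)
    (hy : y + x ^ 2 * s = y) (hz : z + 2 * y * s + x ^ 2 * s ^ 2 = z) :
    s = 0 := by
  by_contra hs
  obtain ⟨rfl, rfl⟩ := eq_zero_and_eq_zero_of_flow_fixed two_ne_zero hs hy hz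
  have ht3 : t ^ 3 = 0 := by linear_combination heq
  exact ht (pow_eq_zero_iff three_ne_zero |>.mp ht3)
end

section
/- If ρ : V → S is a 𝔾_a-torsor (étale locally trivial 𝔾_a-bundle) over a base and V is affine, then the torsor is trivial, i.e. V is isomorphic over S to S × 𝔾_a. In the affine-scheme formulation: if B is the coordinate ring of an affine scheme carrying a locally nilpotent derivation δ admitting a slice s (δ(s) = 1), then B ≅ (ker δ)[s] is a polynomial ring over ker δ. -/
/-!
Since `δ s = 1`, `δ` acts on `(ker δ)[s]` as `d/ds`. A relation `p(s) = 0` therefore yields the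
relation `p'(s) = 0` of lower degree, which in characteristic zero forces `p = 0`. Conversely, by
induction on the order of nilpotency, if `δ b = p(s)` and `q' = p`, then `b - q(s) ∈ ker δ`, so
every `b` is a polynomial in `s`. Finally `B ⧸ (s) ≅ (ker δ)[X] ⧸ (X) ≅ ker δ`.
-/

/-- The kernel of a derivation `δ : B → B`, as a subalgebra of `B`. -/
def kerDer (B : Type) [CommRing B] [Algebra ℂ B] (δ : Derivation ℂ B B) :
    Subalgebra ℂ B where
  carrier := {b : B | δ b = 0}
  mul_mem' := by
    intro a b ha hb
    simp only [Set.mem_setOf_eq] at *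
    rw [Derivation.leibniz, ha, hb, smul_zero, smul_zero, add_zero]
  add_mem' := by
    intro a b ha hb
    simp only [Set.mem_setOf_eq] at *
    rw [map_add, ha, hb, add_zero]
  algebraMap_mem' := by
    intro r
    simp [Derivation.map_algebraMap]

open Polynomial Function

theorem Polynomial.derivative_surjective {A : Type*} [CommRing A] (K : Type*) [Field K]
    [CharZero K] [Algebra K A] : Surjective (derivative : A[X] →ₗ[A] A[X]) := by
  intro p
  induction p using Polynomial.induction_on' with
  | add p q hp hq =>
    obtain ⟨p', rfl⟩ := hp
    obtain ⟨q', rfl⟩ := hq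
    exact ⟨p' + q', map_add _ _ _⟩
  | monomial n a =>
    refine ⟨monomial (n + 1) ((n + 1 : K)⁻¹ • a), ?_⟩
    have hn : (n + 1 : K) ≠ 0 := Nat.cast_add_one_ne_zero n
    rw [derivative_monomial, Nat.add_sub_cancel, Algebra.smul_def, mul_right_comm,
      ← map_natCast (algebraMap K A), ← map_mul, Nat.cast_add_one, inv_mul_cancel₀ hn, map_one,
      one_mul]

namespace Derivation

variable {A B : Type*} [CommRing A] [CommRing B] [Algebra A B] (D : Derivation A B B) {s : B}

theorem map_aeval_of_eq_one (hs : D s = 1) (p : A[X]) :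
    D (aeval s p) = aeval s (derivative p) := by
  rw [map_aeval, hs, smul_eq_mul, mul_one]

theorem injective_aeval_of_eq_one [IsAddTorsionFree A] (hA : Injective (algebraMap A B))
    (hs : D s = 1) : Injective (aeval s : A[X] →ₐ[A] B) := by
  refine (injective_iff_map_eq_zero _).2 fun p hp => ?_
  induction hn : p.natDegree using Nat.strong_induction_on generalizing p with
  | _ n ih =>
  have hp' : derivative p = 0 := by
    by_contra h
    refine h (ih _ ?_ _ (by rw [← D.map_aeval_of_eq_one hs, hp, map_zero]) rfl)
    exact hn ▸ natDegree_derivative_lt (derivative_ne_zero.1 h)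
  rw [eq_C_of_derivative_eq_zero hp', aeval_C] at hp
  rw [eq_C_of_derivative_eq_zero hp', hA (hp.trans (map_zero _).symm), map_zero]

theorem surjective_aeval_of_eq_one (K : Type*) [Field K] [CharZero K] [Algebra K A]
    (hs : D s = 1) (hnil : ∀ b, ∃ n, (⇑D)^[n] b = 0)
    (hker : ∀ b, D b = 0 → b ∈ Set.range (algebraMap A B)) :
    Surjective (aeval s : A[X] →ₐ[A] B) := by
  intro b
  obtain ⟨n, hn⟩ := hnil b
  induction n generalizing b with
  | zero => exact ⟨0, by rw [map_zero, ← hn, iterate_zero_apply]⟩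
  | succ n ih =>
    obtain ⟨p, hp⟩ := ih (D b) hn
    obtain ⟨q, rfl⟩ := derivative_surjective K p
    obtain ⟨a, ha⟩ := hker (b - aeval s q) <| by
      rw [map_sub, D.map_aeval_of_eq_one hs, hp, sub_self]
    exact ⟨C a + q, by rw [map_add, aeval_C, ha, sub_add_cancel]⟩

end Derivation

theorem bijective_quotient_mk_comp_algebraMap {A B : Type*} [CommRing A] [CommRing B]
    [Algebra A B] {s : B} (h : Bijective (aeval s : A[X] →ₐ[A] B)) :
    Bijective ((Ideal.Quotient.mk (Ideal.span {s})).comp (algebraMap A B)) := by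
  refine ⟨(injective_iff_map_eq_zero _).2 fun a ha => ?_, fun x => ?_⟩
  · obtain ⟨c, hc⟩ := Ideal.mem_span_singleton'.1 (Ideal.Quotient.eq_zero_iff_mem.1 ha)
    obtain ⟨p, rfl⟩ := h.2 c
    have : C a = p * X := h.1 (by rw [aeval_C, map_mul, aeval_X, hc])
    simpa using congr_arg (coeff · 0) this
  · obtain ⟨b, rfl⟩ := Ideal.Quotient.mk_surjective x
    obtain ⟨p, rfl⟩ := h.2 b
    refine ⟨p.coeff 0, ?_⟩
    have hmk : Ideal.Quotient.mkₐ A (Ideal.span {s}) s = 0 :=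
      Ideal.Quotient.eq_zero_iff_mem.2 (Ideal.mem_span_singleton_self s)
    rw [RingHom.comp_apply, Ideal.Quotient.mk_algebraMap, coeff_zero_eq_aeval_zero', ← hmk,
      aeval_algHom_apply]
    rfl

def derivationOverKer {B : Type} [CommRing B] [Algebra ℂ B] (δ : Derivation ℂ B B) :
    Derivation (kerDer B δ) B B :=
  Derivation.mk' ⟨⟨δ, δ.map_add⟩, fun a b => by
    change δ (a * b) = a * δ b
    rw [δ.leibniz, show δ a = 0 from a.2, smul_zero, add_zero, smul_eq_mul]⟩ δ.leibniz

/-- Slice theorem (algebraic form of the triviality of a `𝔾_a`-torsor over an affine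
base): if `δ` is a locally nilpotent derivation of a commutative ℂ-algebra `B` admitting
a slice `s` (`δ s = 1`), then `B = (ker δ)[s]` — the evaluation map
`(ker δ)[T] → B`, `T ↦ s`, is bijective — and `ker δ ≅ B/(s)` via the natural map. -/
theorem stmt19 (B : Type) [CommRing B] [Algebra ℂ B]
    (δ : Derivation ℂ B B) (hln : ∀ b : B, ∃ n : ℕ, (δ.toLinearMap ^ n) b = 0)
    (s : B) (hs : δ s = 1) :
    Function.Bijective
      (Polynomial.aeval s : Polynomial (kerDer B δ) →ₐ[kerDer B δ] B) ∧
    Function.Bijective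
      ((Ideal.Quotient.mk (Ideal.span {s})).comp (kerDer B δ).subtype) := by
  have : IsAddTorsionFree (kerDer B δ) := .of_isTorsionFree ℂ _
  have hnil (b : B) : ∃ n, (⇑(derivationOverKer δ))^[n] b = 0 := by
    obtain ⟨n, hn⟩ := hln b
    exact ⟨n, by rwa [Module.End.pow_apply] at hn⟩
  have hbij : Bijective (aeval s : (kerDer B δ)[X] →ₐ[kerDer B δ] B) :=
    ⟨(derivationOverKer δ).injective_aeval_of_eq_one Subtype.val_injective hs,
      (derivationOverKer δ).surjective_aeval_of_eq_one ℂ hs hnil fun b hb => ⟨⟨b, hb⟩, rfl⟩⟩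
  exact ⟨hbij, bijective_quotient_mk_comp_algebraMap hbij⟩
end
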